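/- arXiv:1401.5136 — 2 statements merged into one kernel-verified Lean document; each statement's English description precedes it below -/
import Mathlib

section
/- Let c ∈ ℝ^n be the concatenation of vectors c^1 ∈ ℝ^{n_1}, …, c^T ∈ ℝ^{n_T}, each having at least one negative entry, let p > 1, q = 1, a > 0, and r = 1/(p−1). Define c̃^t by (c̃^t)_i = max(−(c^t)_i, 0), and let t_0 = argmax_t ‖c̃^t‖_{r+1}. Then the minimum of c'θ over {θ = (θ^1,…,θ^T) : θ ≥ 0, ∑_{t=1}^T ‖θ^t‖_p ≤ a} equals −a·max_t ‖c̃^t‖_{r+1}, attained by setting θ^{t_0} = a·(c̃^{t_0})^r / ‖c̃^{t_0}‖_{r+1}^r and θ^t = 0 for t ≠ t_0. -/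
open Finset Real

theorem stmt_3 {T : ℕ} (nv : Fin T → ℕ) (p a r : ℝ) (hp : 1 < p) (ha : 0 < a)
    (hr : r = 1 / (p - 1))
    (c : (t : Fin T) → Fin (nv t) → ℝ) (hneg : ∀ t, ∃ i, c t i < 0)
    (ct : (t : Fin T) → Fin (nv t) → ℝ) (hct : ∀ t i, ct t i = max (-(c t i)) 0)
    (Nc : Fin T → ℝ) (hNc : ∀ t, Nc t = (∑ i, ct t i ^ (r + 1)) ^ (1 / (r + 1)))
    (t0 : Fin T) (ht0 : ∀ t, Nc t ≤ Nc t0)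
    (θh : (t : Fin T) → Fin (nv t) → ℝ)
    (hθh : ∀ t i, θh t i = if t = t0 then a * ct t i ^ r / Nc t ^ r else 0) :
    IsLeast ((fun θ : (t : Fin T) → Fin (nv t) → ℝ => ∑ t, ∑ i, c t i * θ t i) ''
        {θ | (∀ t i, 0 ≤ θ t i) ∧ ∑ t, (∑ i, |θ t i| ^ p) ^ (1 / p) ≤ a}) (-(a * Nc t0)) ∧
      θh ∈ {θ : (t : Fin T) → Fin (nv t) → ℝ |
          (∀ t i, 0 ≤ θ t i) ∧ ∑ t, (∑ i, |θ t i| ^ p) ^ (1 / p) ≤ a} ∧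
      ∑ t, ∑ i, c t i * θh t i = -(a * Nc t0) := by
  have hp0 : (0:ℝ) < p := by linarith
  have hp1 : (0:ℝ) < p - 1 := by linarith
  have hr0 : 0 < r := by rw [hr]; positivity
  have hr1 : 0 < r + 1 := by linarith
  have hrp : r * p = r + 1 := by
    rw [hr]; field_simp; ring
  have hctnn : ∀ t i, 0 ≤ ct t i := by intro t i; rw [hct]; exact le_max_right _ _
  have hS : ∀ t, 0 < ∑ i, ct t i ^ (r + 1) := by
    intro t
    obtain ⟨i, hi⟩ := hneg t
    have hcti : 0 < ct t i := by rw [hct]; exact lt_max_of_lt_left (by linarith)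
    exact Finset.sum_pos' (fun j _ => Real.rpow_nonneg (hctnn t j) _)
      ⟨i, Finset.mem_univ i, Real.rpow_pos_of_pos hcti _⟩
  have hNpos : ∀ t, 0 < Nc t := by
    intro t; rw [hNc]; exact Real.rpow_pos_of_pos (hS t) _
  have hNrp : ∀ t, Nc t ^ (r + 1) = ∑ i, ct t i ^ (r + 1) := by
    intro t; rw [hNc, one_div, Real.rpow_inv_rpow (hS t).le hr1.ne']
  have hkey : ∀ t i, c t i * ct t i ^ r = -(ct t i ^ (r + 1)) := by
    intro t i
    rcases lt_trichotomy (c t i) 0 with h | h | h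
    · have hcteq : ct t i = -(c t i) := by
        rw [hct]; exact max_eq_left (by linarith)
      rw [hcteq, Real.rpow_add_one (by linarith : (0:ℝ) < -(c t i)).ne']
      ring
    · have hcteq : ct t i = 0 := by rw [hct, h]; simp
      rw [hcteq, Real.zero_rpow hr0.ne', Real.zero_rpow hr1.ne']
      simp
    · have hcteq : ct t i = 0 := by
        rw [hct]; exact max_eq_right (by linarith)
      rw [hcteq, Real.zero_rpow hr0.ne', Real.zero_rpow hr1.ne']
      simp
  have hθnn : ∀ t i, 0 ≤ θh t i := by
    intro t i; rw [hθh]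
    split_ifs with h
    · exact div_nonneg (mul_nonneg ha.le (Real.rpow_nonneg (hctnn t i) _))
        (Real.rpow_nonneg (hNpos t).le _)
    · exact le_refl 0
  -- per-block Lp norm of θh
  have hLp : ∀ t, (∑ i, |θh t i| ^ p) ^ (1 / p) = if t = t0 then a else 0 := by
    intro t
    by_cases h : t = t0
    · subst h
      have hcalc : ∀ i : Fin (nv t), |θh t i| ^ p
          = a ^ p * ct t i ^ (r + 1) / Nc t ^ (r + 1) := by
        intro i
        rw [abs_of_nonneg (hθnn t i), hθh, if_pos rfl,
          Real.div_rpow (mul_nonneg ha.le (Real.rpow_nonneg (hctnn t i) _))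
            (Real.rpow_nonneg (hNpos t).le _),
          Real.mul_rpow ha.le (Real.rpow_nonneg (hctnn t i) _),
          ← Real.rpow_mul (hctnn t i), ← Real.rpow_mul (hNpos t).le, hrp]
      rw [if_pos rfl]
      have : ∑ i, |θh t i| ^ p = a ^ p := by
        simp_rw [hcalc]
        rw [← Finset.sum_div, ← Finset.mul_sum, hNrp t,
          mul_div_assoc, div_self (hS t).ne', mul_one]
      rw [this, one_div, Real.rpow_rpow_inv ha.le hp0.ne']
    · rw [if_neg h]
      have : ∀ i : Fin (nv t), |θh t i| ^ p = 0 := by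
        intro i; rw [hθh, if_neg h, abs_zero, Real.zero_rpow hp0.ne']
      simp_rw [this]
      rw [Finset.sum_const, smul_zero, Real.zero_rpow (by positivity : (1:ℝ)/p ≠ 0)]
  have hmem : (∀ t i, 0 ≤ θh t i) ∧ ∑ t, (∑ i, |θh t i| ^ p) ^ (1 / p) ≤ a := by
    refine ⟨hθnn, ?_⟩
    simp_rw [hLp]
    rw [Finset.sum_ite_eq' Finset.univ t0 (fun _ => a)]
    simp
  have hval : ∑ t, ∑ i, c t i * θh t i = -(a * Nc t0) := by
    have hblock : ∀ t, ∑ i, c t i * θh t i = if t = t0 then -(a * Nc t0) else 0 := by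
      intro t
      by_cases h : t = t0
      · subst h
        rw [if_pos rfl]
        have hcalc : ∀ i : Fin (nv t), c t i * θh t i
            = -(a * (ct t i ^ (r + 1) / Nc t ^ r)) := by
          intro i
          calc c t i * θh t i = a * (c t i * ct t i ^ r) / Nc t ^ r := by
                rw [hθh, if_pos rfl]; ring
            _ = -(a * (ct t i ^ (r + 1) / Nc t ^ r)) := by rw [hkey t i]; ring
        simp_rw [hcalc]
        rw [Finset.sum_neg_distrib]
        congr 1
        rw [← Finset.mul_sum, ← Finset.sum_div, ← hNrp t, Real.rpow_add_one (hNpos t).ne']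
        field_simp [(Real.rpow_pos_of_pos (hNpos t) r).ne']
      · rw [if_neg h]
        have : ∀ i : Fin (nv t), c t i * θh t i = 0 := by
          intro i; rw [hθh, if_neg h, mul_zero]
        simp_rw [this]
        exact Finset.sum_const_zero
    simp_rw [hblock]
    rw [Finset.sum_ite_eq' Finset.univ t0 (fun _ => -(a * Nc t0))]
    simp
  have hconj : Real.HolderConjugate (r + 1) p := by
    refine Real.holderConjugate_iff.mpr ⟨?_, ?_⟩
    · linarith
    · rw [hr]; field_simp; ring
  refine ⟨⟨⟨θh, hmem, hval⟩, ?_⟩, hmem, hval⟩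
  rintro v ⟨θ, ⟨hpos, hcon⟩, rfl⟩
  simp only
  have hBnn : ∀ t, 0 ≤ (∑ i, |θ t i| ^ p) ^ (1 / p) := by
    intro t
    exact Real.rpow_nonneg (Finset.sum_nonneg fun i _ =>
      Real.rpow_nonneg (abs_nonneg _) _) _
  have hstep : ∀ t, -(Nc t0 * (∑ i, |θ t i| ^ p) ^ (1 / p)) ≤ ∑ i, c t i * θ t i := by
    intro t
    have hHolder := Real.inner_le_Lp_mul_Lq Finset.univ (ct t) (θ t) hconj
    have habs : ∀ i : Fin (nv t), |ct t i| = ct t i := fun i => abs_of_nonneg (hctnn t i)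
    simp_rw [habs] at hHolder
    have hH2 : ∑ i, ct t i * θ t i ≤ Nc t * (∑ i, |θ t i| ^ p) ^ (1 / p) := by
      rw [hNc]; exact hHolder
    have hH3 : Nc t * (∑ i, |θ t i| ^ p) ^ (1 / p)
        ≤ Nc t0 * (∑ i, |θ t i| ^ p) ^ (1 / p) :=
      mul_le_mul_of_nonneg_right (ht0 t) (hBnn t)
    have hlow : ∑ i, -(ct t i) * θ t i ≤ ∑ i, c t i * θ t i := by
      apply Finset.sum_le_sum
      intro i _
      apply mul_le_mul_of_nonneg_right _ (hpos t i)
      have : -(c t i) ≤ ct t i := by rw [hct]; exact le_max_left _ _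
      linarith
    have : ∑ i, -(ct t i) * θ t i = -(∑ i, ct t i * θ t i) := by
      simp_rw [neg_mul]; rw [Finset.sum_neg_distrib]
    linarith
  calc -(a * Nc t0) = -(Nc t0 * a) := by ring
    _ ≤ -(Nc t0 * ∑ t, (∑ i, |θ t i| ^ p) ^ (1 / p)) := by
        apply neg_le_neg
        exact mul_le_mul_of_nonneg_left hcon (hNpos t0).le
    _ = ∑ t, -(Nc t0 * (∑ i, |θ t i| ^ p) ^ (1 / p)) := by
        rw [Finset.mul_sum, Finset.sum_neg_distrib]
    _ ≤ ∑ t, ∑ i, c t i * θ t i := Finset.sum_le_sum fun t _ => hstep t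
end

section
/- Let c ∈ ℝ^n be the concatenation of vectors c^1,…,c^T, each with at least one negative entry, let p > 1, q > 1, a > 0, r = 1/(p−1), s = 1/(q−1). Define c̃^t entrywise by max(−c_i, 0), and set σ^t = a·‖c̃^t‖_{r+1}^s / (∑_{u=1}^T ‖c̃^u‖_{r+1}^{s+1})^{1/q}. Then θ̂ with blocks θ̂^t = σ^t·(c̃^t)^r / ‖c̃^t‖_{r+1}^r minimizes c'θ over {θ ≥ 0 : (∑_{t} ‖θ^t‖_p^q)^{1/q} ≤ a}, and the minimum value equals −a·(∑_t ‖c̃^t‖_{r+1}^{s+1})^{1/(s+1)}. -/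
/-!
Since `θ ≥ 0` and `c ≥ -c̃`, we have `c'θ ≥ -c̃'θ`. Hölder's inequality for the conjugate pair
`(r + 1, p)` inside each block, and then for `(s + 1, q)` across blocks, bounds `c̃'θ` by
`(∑ₜ ‖c̃ᵗ‖_{r+1} ^ (s+1)) ^ (1/(s+1))` times the mixed norm of `θ`, which is at most `a`.
The point `θ̂` is the equality case of both inequalities: for `x ≥ 0`, `l • x ^ r / ‖x‖_{r+1} ^ r`
has `p`-norm `l` and pairs with `x` to `l ‖x‖_{r+1}`; `σ` is this construction applied to the
vector of block norms with `l = a`. Finally `θ̂` vanishes where `c ≥ 0`, so `c'θ̂ = -c̃'θ̂`.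
-/

open Finset Real

lemma holderConjugate_one_div_sub_one_add_one {p : ℝ} (hp : 1 < p) :
    (1 / (p - 1) + 1).HolderConjugate p :=
  ((holderConjugate_iff_eq_conjExponent hp).2 (by have := sub_pos.2 hp; field_simp; ring)).symm

lemma rpow_one_div_eq_rpow_one_div_rpow {s q S : ℝ} (hqc : (s + 1).HolderConjugate q)
    (hS : 0 ≤ S) : S ^ (1 / q) = (S ^ (1 / (s + 1))) ^ s := by
  rw [← rpow_mul hS]
  congr 1
  field_simp [hqc.ne_zero, hqc.symm.ne_zero]
  linear_combination -hqc.mul_eq_add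

lemma neg_max_neg_zero_mul_le_mul {c θ : ℝ} (hθ : 0 ≤ θ) : -(max (-c) 0 * θ) ≤ c * θ := by
  rw [← neg_mul]
  exact mul_le_mul_of_nonneg_right (neg_le.2 (le_max_left _ _)) hθ

lemma mul_eq_neg_max_neg_zero_mul {c θ : ℝ} (h : 0 ≤ c → θ = 0) :
    c * θ = -(max (-c) 0 * θ) := by
  rcases le_or_gt 0 c with hc | hc
  · simp [h hc]
  · rw [max_eq_left (by linarith)]; ring

lemma div_rpow_mul_rpow_add_one (l : ℝ) {N r : ℝ} (hN : 0 ≤ N) (hr : 0 < r) :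
    l / N ^ r * N ^ (r + 1) = l * N := by
  rcases hN.eq_or_lt with rfl | hN
  · simp [zero_rpow hr.ne']
  · rw [rpow_add_one hN.ne']
    field_simp

section HolderWitness

variable {ι : Type*} [Fintype ι] {x : ι → ℝ} {r p l : ℝ}

noncomputable def holderWitness (r l : ℝ) (x : ι → ℝ) (i : ι) : ℝ :=
  l * x i ^ r / ((∑ j, x j ^ (r + 1)) ^ (1 / (r + 1))) ^ r

lemma holderWitness_nonneg (hx : ∀ i, 0 ≤ x i) (hl : 0 ≤ l) (i : ι) :
    0 ≤ holderWitness r l x i :=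
  div_nonneg (mul_nonneg hl (rpow_nonneg (hx i) _))
    (rpow_nonneg (rpow_nonneg (sum_nonneg fun j _ => rpow_nonneg (hx j) _) _) _)

lemma sum_mul_holderWitness (hr : 0 < r) (hx : ∀ i, 0 ≤ x i) :
    ∑ i, x i * holderWitness r l x i = l * (∑ i, x i ^ (r + 1)) ^ (1 / (r + 1)) := by
  have hS : 0 ≤ ∑ i, x i ^ (r + 1) := sum_nonneg fun i _ => rpow_nonneg (hx i) _
  set N := (∑ i, x i ^ (r + 1)) ^ (1 / (r + 1))
  have hNpow : N ^ (r + 1) = ∑ i, x i ^ (r + 1) := by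
    simp only [N, one_div]
    exact rpow_inv_rpow hS (by linarith)
  calc ∑ i, x i * holderWitness r l x i = l / N ^ r * ∑ i, x i ^ (r + 1) := by
        rw [mul_sum]
        refine sum_congr rfl fun i _ => ?_
        rw [holderWitness, rpow_add_one' (hx i) (by linarith)]
        ring
    _ = l * N := by
        rw [← hNpow, div_rpow_mul_rpow_add_one l (rpow_nonneg hS _) hr]

/- An equality unless `x = 0`, where the witness is `0` whatever `l` is. -/
lemma Lp_holderWitness_le (hpc : (r + 1).HolderConjugate p) (hx : ∀ i, 0 ≤ x i) (hl : 0 ≤ l) :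
    (∑ i, |holderWitness r l x i| ^ p) ^ (1 / p) ≤ l := by
  have hrp : r * p = r + 1 := by linarith [hpc.mul_eq_add]
  have hS : 0 ≤ ∑ i, x i ^ (r + 1) := sum_nonneg fun i _ => rpow_nonneg (hx i) _
  set N := (∑ i, x i ^ (r + 1)) ^ (1 / (r + 1))
  have hNpow : N ^ (r + 1) = ∑ i, x i ^ (r + 1) := by
    simp only [N, one_div]
    exact rpow_inv_rpow hS hpc.ne_zero
  have hN0 : 0 ≤ N := rpow_nonneg hS _
  have hμ : 0 ≤ l / N ^ r := div_nonneg hl (rpow_nonneg hN0 _)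
  calc (∑ i, |holderWitness r l x i| ^ p) ^ (1 / p)
      = ((l / N ^ r) ^ p * N ^ (r + 1)) ^ (1 / p) := by
        rw [hNpow, mul_sum]
        refine congrArg (· ^ (1 / p)) (sum_congr rfl fun i _ => ?_)
        rw [abs_of_nonneg (holderWitness_nonneg hx hl i), holderWitness, mul_div_right_comm,
          mul_rpow hμ (rpow_nonneg (hx i) _), ← rpow_mul (hx i), hrp]
    _ = l / N ^ r * N ^ r := by
        rw [mul_rpow (rpow_nonneg hμ _) (rpow_nonneg hN0 _), ← rpow_mul hμ, ← rpow_mul hN0,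
          mul_one_div_cancel hpc.symm.ne_zero, rpow_one, ← hrp,
          mul_one_div, mul_div_cancel_right₀ _ hpc.symm.ne_zero]
    _ ≤ l := by
        rcases (rpow_nonneg hN0 r).eq_or_lt with h | h
        · simp [← h, hl]
        · rw [div_mul_cancel₀ _ h.ne']

lemma sum_mul_holderWitness_negPart {c : ι → ℝ} (hr : 0 < r) (hx : ∀ i, x i = max (-c i) 0) :
    ∑ i, c i * holderWitness r l x i = -(l * (∑ i, x i ^ (r + 1)) ^ (1 / (r + 1))) := by
  have hx0 : ∀ i, 0 ≤ x i := fun i => hx i ▸ le_max_right _ _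
  have hsign : ∀ i, c i * holderWitness r l x i = -(x i * holderWitness r l x i) := fun i => by
    rw [hx i]
    refine mul_eq_neg_max_neg_zero_mul fun hc => ?_
    rw [holderWitness, hx i, max_eq_right (by linarith), zero_rpow hr.ne', mul_zero, zero_div]
  rw [sum_congr rfl fun i _ => hsign i, sum_neg_distrib, sum_mul_holderWitness hr hx0]

end HolderWitness

section MixedNorm

variable {T : Type*} [Fintype T] {n : T → Type*} [∀ t, Fintype (n t)]

noncomputable def mixedLpNorm (p q : ℝ) (θ : (t : T) → n t → ℝ) : ℝ :=
  (∑ t, ((∑ i, |θ t i| ^ p) ^ (1 / p)) ^ q) ^ (1 / q)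

lemma sum_sum_mul_le_mixedLpNorm_mul_mixedLpNorm {p q p' q' : ℝ} (hp : p'.HolderConjugate p)
    (hq : q'.HolderConjugate q) (x θ : (t : T) → n t → ℝ) :
    ∑ t, ∑ i, x t i * θ t i ≤ mixedLpNorm p' q' x * mixedLpNorm p q θ :=
  calc ∑ t, ∑ i, x t i * θ t i
      ≤ ∑ t, (∑ i, |x t i| ^ p') ^ (1 / p') * (∑ i, |θ t i| ^ p) ^ (1 / p) :=
        sum_le_sum fun t _ => inner_le_Lp_mul_Lq _ _ _ hp
    _ ≤ _ := inner_le_Lp_mul_Lq_of_nonneg _ hq (fun _ _ => by positivity)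
        (fun _ _ => by positivity)

lemma mixedLpNorm_le_of_forall_le {p q : ℝ} (hq : 0 < q) {θ : (t : T) → n t → ℝ}
    {σ : T → ℝ} (h : ∀ t, (∑ i, |θ t i| ^ p) ^ (1 / p) ≤ σ t) :
    mixedLpNorm p q θ ≤ (∑ t, |σ t| ^ q) ^ (1 / q) := by
  unfold mixedLpNorm
  gcongr with t
  exact (h t).trans (le_abs_self _)

noncomputable def mixedHolderWitness (r s a : ℝ) (x : (t : T) → n t → ℝ) (t : T) : n t → ℝ :=
  holderWitness r (holderWitness s a (fun u => (∑ j, x u j ^ (r + 1)) ^ (1 / (r + 1))) t) (x t)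

section MixedHolderWitness

variable {p q r s a : ℝ} {x : (t : T) → n t → ℝ}

lemma mixedHolderWitness_nonneg (hx : ∀ t i, 0 ≤ x t i) (ha : 0 ≤ a) (t : T) (i : n t) :
    0 ≤ mixedHolderWitness r s a x t i :=
  holderWitness_nonneg (hx t) (holderWitness_nonneg
    (fun u => rpow_nonneg (sum_nonneg fun j _ => rpow_nonneg (hx u j) _) _) ha t) i

lemma mixedLpNorm_mixedHolderWitness_le (hpc : (r + 1).HolderConjugate p)
    (hqc : (s + 1).HolderConjugate q) (hx : ∀ t i, 0 ≤ x t i) (ha : 0 ≤ a) :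
    mixedLpNorm p q (mixedHolderWitness r s a x) ≤ a := by
  have hN0 : ∀ u, 0 ≤ (∑ j, x u j ^ (r + 1)) ^ (1 / (r + 1)) := fun u =>
    rpow_nonneg (sum_nonneg fun j _ => rpow_nonneg (hx u j) _) _
  calc mixedLpNorm p q (mixedHolderWitness r s a x)
      ≤ (∑ t, |holderWitness s a (fun u => (∑ j, x u j ^ (r + 1)) ^ (1 / (r + 1))) t| ^ q) ^
          (1 / q) :=
        mixedLpNorm_le_of_forall_le hqc.symm.pos fun t =>
          Lp_holderWitness_le hpc (hx t) (holderWitness_nonneg hN0 ha t)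
    _ ≤ a := Lp_holderWitness_le hqc hN0 ha

lemma sum_sum_mul_mixedHolderWitness_negPart (hr : 0 < r) (hs : 0 < s)
    {c : (t : T) → n t → ℝ} (hx : ∀ t i, x t i = max (-c t i) 0) :
    ∑ t, ∑ i, c t i * mixedHolderWitness r s a x t i =
      -(a * (∑ t, ((∑ i, x t i ^ (r + 1)) ^ (1 / (r + 1))) ^ (s + 1)) ^ (1 / (s + 1))) := by
  have hN0 : ∀ u, 0 ≤ (∑ j, x u j ^ (r + 1)) ^ (1 / (r + 1)) := fun u =>
    rpow_nonneg (sum_nonneg fun j _ => rpow_nonneg (hx u j ▸ le_max_right _ _) _) _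
  simp only [mixedHolderWitness, sum_mul_holderWitness_negPart hr (hx _), sum_neg_distrib]
  rw [← sum_mul_holderWitness hs hN0]
  simp only [mul_comm]

end MixedHolderWitness

lemma neg_le_sum_sum_mul_of_mixedLpNorm_le {p q r s a : ℝ} (hpc : (r + 1).HolderConjugate p)
    (hqc : (s + 1).HolderConjugate q) {c ct θ : (t : T) → n t → ℝ}
    (hct : ∀ t i, ct t i = max (-c t i) 0) {Nc : T → ℝ}
    (hNc : ∀ t, Nc t = (∑ i, ct t i ^ (r + 1)) ^ (1 / (r + 1)))
    (hθ0 : ∀ t i, 0 ≤ θ t i) (hθa : mixedLpNorm p q θ ≤ a) :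
    -(a * (∑ t, Nc t ^ (s + 1)) ^ (1 / (s + 1))) ≤ ∑ t, ∑ i, c t i * θ t i := by
  have hct0 : ∀ t i, 0 ≤ ct t i := fun t i => hct t i ▸ le_max_right _ _
  have hdual : mixedLpNorm (r + 1) (s + 1) ct = (∑ t, Nc t ^ (s + 1)) ^ (1 / (s + 1)) := by
    simp only [mixedLpNorm, abs_of_nonneg (hct0 _ _), ← hNc]
  have hdual0 : 0 ≤ mixedLpNorm (r + 1) (s + 1) ct := by unfold mixedLpNorm; positivity
  calc -(a * (∑ t, Nc t ^ (s + 1)) ^ (1 / (s + 1)))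
      ≤ -(mixedLpNorm (r + 1) (s + 1) ct * mixedLpNorm p q θ) := by
        rw [← hdual, mul_comm a]
        exact neg_le_neg (mul_le_mul_of_nonneg_left hθa hdual0)
    _ ≤ -∑ t, ∑ i, ct t i * θ t i :=
        neg_le_neg (sum_sum_mul_le_mixedLpNorm_mul_mixedLpNorm hpc hqc ct θ)
    _ ≤ ∑ t, ∑ i, c t i * θ t i := by
        simp only [← sum_neg_distrib, hct]
        exact sum_le_sum fun t _ => sum_le_sum fun i _ => neg_max_neg_zero_mul_le_mul (hθ0 t i)

end MixedNorm

theorem stmt_4_general {T : ℕ} (nv : Fin T → ℕ) (p q a r s : ℝ) (hp : 1 < p) (hq : 1 < q)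
    (ha : 0 < a) (hr : r = 1 / (p - 1)) (hs : s = 1 / (q - 1))
    (c : (t : Fin T) → Fin (nv t) → ℝ)
    (ct : (t : Fin T) → Fin (nv t) → ℝ) (hct : ∀ t i, ct t i = max (-(c t i)) 0)
    (Nc : Fin T → ℝ) (hNc : ∀ t, Nc t = (∑ i, ct t i ^ (r + 1)) ^ (1 / (r + 1)))
    (σ : Fin T → ℝ)
    (hσ : ∀ t, σ t = a * Nc t ^ s / (∑ u, Nc u ^ (s + 1)) ^ (1 / q))
    (θh : (t : Fin T) → Fin (nv t) → ℝ)
    (hθh : ∀ t i, θh t i = σ t * ct t i ^ r / Nc t ^ r) :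
    IsLeast ((fun θ : (t : Fin T) → Fin (nv t) → ℝ => ∑ t, ∑ i, c t i * θ t i) ''
        {θ | (∀ t i, 0 ≤ θ t i) ∧
          (∑ t, ((∑ i, |θ t i| ^ p) ^ (1 / p)) ^ q) ^ (1 / q) ≤ a})
      (-(a * (∑ t, Nc t ^ (s + 1)) ^ (1 / (s + 1)))) ∧
      θh ∈ {θ : (t : Fin T) → Fin (nv t) → ℝ |
          (∀ t i, 0 ≤ θ t i) ∧
          (∑ t, ((∑ i, |θ t i| ^ p) ^ (1 / p)) ^ q) ^ (1 / q) ≤ a} ∧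
      ∑ t, ∑ i, c t i * θh t i = -(a * (∑ t, Nc t ^ (s + 1)) ^ (1 / (s + 1))) := by
  have hpc : (r + 1).HolderConjugate p := hr ▸ holderConjugate_one_div_sub_one_add_one hp
  have hqc : (s + 1).HolderConjugate q := hs ▸ holderConjugate_one_div_sub_one_add_one hq
  have hr0 : 0 < r := hr ▸ one_div_pos.2 (sub_pos.2 hp)
  have hs0 : 0 < s := hs ▸ one_div_pos.2 (sub_pos.2 hq)
  have hct0 : ∀ t i, 0 ≤ ct t i := fun t i => hct t i ▸ le_max_right _ _
  have hNc0 : ∀ t, 0 ≤ Nc t := fun t =>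
    hNc t ▸ rpow_nonneg (sum_nonneg fun i _ => rpow_nonneg (hct0 t i) _) _
  have hθw : θh = mixedHolderWitness r s a ct := by
    funext t i
    simp only [hθh, hσ, mixedHolderWitness, holderWitness, ← hNc]
    rw [rpow_one_div_eq_rpow_one_div_rpow hqc (sum_nonneg fun u _ => rpow_nonneg (hNc0 u) _)]
  subst hθw
  have hfeas : (∀ t i, 0 ≤ mixedHolderWitness r s a ct t i) ∧
      mixedLpNorm p q (mixedHolderWitness r s a ct) ≤ a :=
    ⟨mixedHolderWitness_nonneg hct0 ha.le, mixedLpNorm_mixedHolderWitness_le hpc hqc hct0 ha.le⟩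
  have hval := sum_sum_mul_mixedHolderWitness_negPart (a := a) hr0 hs0 hct
  simp only [← hNc] at hval
  refine ⟨⟨⟨_, hfeas, hval⟩, ?_⟩, hfeas, hval⟩
  rintro _ ⟨θ, ⟨hθ0, hθa⟩, rfl⟩
  exact neg_le_sum_sum_mul_of_mixedLpNorm_le hpc hqc hct hNc hθ0 hθa

theorem stmt_4 {T : ℕ} (nv : Fin T → ℕ) (p q a r s : ℝ) (hp : 1 < p) (hq : 1 < q)
    (ha : 0 < a) (hr : r = 1 / (p - 1)) (hs : s = 1 / (q - 1))
    (c : (t : Fin T) → Fin (nv t) → ℝ) (hneg : ∀ t, ∃ i, c t i < 0)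
    (ct : (t : Fin T) → Fin (nv t) → ℝ) (hct : ∀ t i, ct t i = max (-(c t i)) 0)
    (Nc : Fin T → ℝ) (hNc : ∀ t, Nc t = (∑ i, ct t i ^ (r + 1)) ^ (1 / (r + 1)))
    (σ : Fin T → ℝ)
    (hσ : ∀ t, σ t = a * Nc t ^ s / (∑ u, Nc u ^ (s + 1)) ^ (1 / q))
    (θh : (t : Fin T) → Fin (nv t) → ℝ)
    (hθh : ∀ t i, θh t i = σ t * ct t i ^ r / Nc t ^ r) :
    IsLeast ((fun θ : (t : Fin T) → Fin (nv t) → ℝ => ∑ t, ∑ i, c t i * θ t i) ''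
        {θ | (∀ t i, 0 ≤ θ t i) ∧
          (∑ t, ((∑ i, |θ t i| ^ p) ^ (1 / p)) ^ q) ^ (1 / q) ≤ a})
      (-(a * (∑ t, Nc t ^ (s + 1)) ^ (1 / (s + 1)))) ∧
      θh ∈ {θ : (t : Fin T) → Fin (nv t) → ℝ |
          (∀ t i, 0 ≤ θ t i) ∧
          (∑ t, ((∑ i, |θ t i| ^ p) ^ (1 / p)) ^ q) ^ (1 / q) ≤ a} ∧
      ∑ t, ∑ i, c t i * θh t i = -(a * (∑ t, Nc t ^ (s + 1)) ^ (1 / (s + 1))) :=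
  stmt_4_general nv p q a r s hp hq ha hr hs c ct hct Nc hNc σ hσ θh hθh
end
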